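/- Let q ∈ ℚ_p with |q|_p = p^k > 1. Then for each n ≥ 1, the number of points x ∈ ℤ_p with T_q^n(x) = x is exactly p^{nk}. -/

import Mathlib

/-- `T : ℤ_p → ℤ_p` is the `p`-adic `q`-transformation: `T x` is obtained from `q·x` by
deleting the fractional (negative-power) part of its `p`-adic expansion, i.e. `q·x - T x`
is a rational of the form `m / p^k` with `0 ≤ m < p^k`. -/
def IsDigitTrunc {p : ℕ} [Fact p.Prime] (q : ℚ_[p]) (T : ℤ_[p] → ℤ_[p]) : Prop :=
  ∀ x : ℤ_[p], ∃ m k : ℕ, m < p ^ k ∧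
    ((T x : ℚ_[p]) = q * (x : ℚ_[p]) - (m : ℚ_[p]) / (p : ℚ_[p]) ^ k)

section Aux

variable {p : ℕ} [hp : Fact p.Prime]

lemma frac_unique {m j m' j' : ℕ} (hm : m < p ^ j) (hm' : m' < p ^ j')
    (h : ‖(m : ℚ_[p]) / (p : ℚ_[p]) ^ j - (m' : ℚ_[p]) / (p : ℚ_[p]) ^ j'‖ ≤ 1) :
    (m : ℚ_[p]) / (p : ℚ_[p]) ^ j = (m' : ℚ_[p]) / (p : ℚ_[p]) ^ j' := by
  have hp1 : (1 : ℝ) < p := by exact_mod_cast hp.1.one_lt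
  have hp0 : (p : ℚ_[p]) ≠ 0 := Nat.cast_ne_zero.2 hp.1.ne_zero
  set N : ℤ := (m : ℤ) * p ^ j' - (m' : ℤ) * p ^ j with hN
  have hnum : (N : ℚ_[p]) = (m : ℚ_[p]) * (p : ℚ_[p]) ^ j' - (m' : ℚ_[p]) * (p : ℚ_[p]) ^ j := by
    rw [hN]; push_cast; ring
  have hdiff : (m : ℚ_[p]) / (p : ℚ_[p]) ^ j - (m' : ℚ_[p]) / (p : ℚ_[p]) ^ j'
      = (N : ℚ_[p]) / (p : ℚ_[p]) ^ (j + j') := by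
    rw [hnum]
    field_simp
    ring
  rw [hdiff] at h
  have hnormN : ‖(N : ℚ_[p])‖ ≤ (p : ℝ) ^ (-(j + j' : ℕ) : ℤ) := by
    rw [norm_div, norm_pow, Padic.norm_p,
      div_le_one (by positivity)] at h
    calc ‖(N : ℚ_[p])‖ ≤ ((p : ℝ)⁻¹) ^ (j + j') := h
      _ = (p : ℝ) ^ (-(j + j' : ℕ) : ℤ) := by
          rw [inv_pow, ← zpow_natCast, ← zpow_neg]
  have hdvd : ((p : ℤ) ^ (j + j')) ∣ N := (Padic.norm_int_le_pow_iff_dvd N (j + j')).1 hnormN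
  have habs : |N| < (p : ℤ) ^ (j + j') := by
    have h1 : (m : ℤ) < (p : ℤ) ^ j := by exact_mod_cast hm
    have h2 : (m' : ℤ) < (p : ℤ) ^ j' := by exact_mod_cast hm'
    have hpz : (0 : ℤ) < (p : ℤ) := by exact_mod_cast hp.1.pos
    have h3 : (0 : ℤ) < (p : ℤ) ^ j := pow_pos hpz j
    have h4 : (0 : ℤ) < (p : ℤ) ^ j' := pow_pos hpz j'
    have h5 : (0 : ℤ) ≤ (m : ℤ) := Int.natCast_nonneg m
    have h6 : (0 : ℤ) ≤ (m' : ℤ) := Int.natCast_nonneg m'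
    rw [abs_lt, pow_add]
    constructor <;> nlinarith
  have hN0 : N = 0 := Int.eq_zero_of_abs_lt_dvd hdvd habs
  have key : (m : ℤ) * (p : ℤ) ^ j' = (m' : ℤ) * (p : ℤ) ^ j := by omega
  rw [div_eq_div_iff (pow_ne_zero _ hp0) (pow_ne_zero _ hp0)]
  exact_mod_cast congrArg (fun z : ℤ => (z : ℚ_[p])) key

lemma step_eq {q : ℚ_[p]} {T : ℤ_[p] → ℤ_[p]} (hT : IsDigitTrunc q T) {x x' : ℤ_[p]}
    (h : ‖q * ((x' : ℚ_[p]) - (x : ℚ_[p]))‖ ≤ 1) :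
    (T x' : ℚ_[p]) = (T x : ℚ_[p]) + q * ((x' : ℚ_[p]) - (x : ℚ_[p])) := by
  obtain ⟨m, j, hm, hx⟩ := hT x
  obtain ⟨m', j', hm', hx'⟩ := hT x'
  have hfr : (m : ℚ_[p]) / (p : ℚ_[p]) ^ j = (m' : ℚ_[p]) / (p : ℚ_[p]) ^ j' := by
    apply frac_unique hm hm'
    have hrw : (m : ℚ_[p]) / (p : ℚ_[p]) ^ j - (m' : ℚ_[p]) / (p : ℚ_[p]) ^ j'
        = ((T x' : ℚ_[p]) - (T x : ℚ_[p])) - q * ((x' : ℚ_[p]) - (x : ℚ_[p])) := by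
      rw [hx, hx']; ring
    have tri : ∀ a b : ℚ_[p], ‖a - b‖ ≤ max ‖a‖ ‖b‖ := fun a b => by
      rw [sub_eq_add_neg]
      simpa using Padic.nonarchimedean a (-b)
    rw [hrw]
    refine le_trans (tri _ _) (max_le ?_ h)
    refine le_trans (tri _ _) (max_le ?_ ?_) <;>
      simpa [← PadicInt.norm_def] using PadicInt.norm_le_one _
  rw [hx, hx', hfr]
  ring

lemma iter_eq {q : ℚ_[p]} {k : ℕ} (hq : ‖q‖ = (p : ℝ) ^ k) {T : ℤ_[p] → ℤ_[p]}
    (hT : IsDigitTrunc q T) (n : ℕ) (x t : ℤ_[p])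
    (ht : ‖(t : ℚ_[p])‖ ≤ (p : ℝ) ^ (-(n * k : ℕ) : ℤ)) :
    ∀ j ≤ n, (T^[j] (x + t) : ℚ_[p]) = (T^[j] x : ℚ_[p]) + q ^ j * (t : ℚ_[p]) := by
  have hp1 : (1 : ℝ) < p := by exact_mod_cast hp.1.one_lt
  intro j hj
  induction j with
  | zero => simp [PadicInt.coe_add]
  | succ j ih =>
    have hj' : j ≤ n := Nat.le_of_succ_le hj
    have IH := ih hj'
    have hnorm : ‖q * ((T^[j] (x + t) : ℚ_[p]) - (T^[j] x : ℚ_[p]))‖ ≤ 1 := by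
      have : (T^[j] (x + t) : ℚ_[p]) - (T^[j] x : ℚ_[p]) = q ^ j * (t : ℚ_[p]) := by
        rw [IH]; ring
      rw [this, ← mul_assoc, ← pow_succ', norm_mul, norm_pow, hq]
      calc ((p : ℝ) ^ k) ^ (j + 1) * ‖(t : ℚ_[p])‖
          ≤ ((p : ℝ) ^ k) ^ (j + 1) * (p : ℝ) ^ (-(n * k : ℕ) : ℤ) := by
            apply mul_le_mul_of_nonneg_left ht (by positivity)
        _ = (p : ℝ) ^ ((k * (j + 1) : ℕ) - (n * k : ℕ) : ℤ) := by
            rw [← pow_mul, ← zpow_natCast (p : ℝ) (k * (j + 1)), ← zpow_add₀ (by positivity),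
              sub_eq_add_neg]
        _ ≤ (p : ℝ) ^ (0 : ℤ) := by
            apply zpow_le_zpow_right₀ (le_of_lt hp1)
            have : k * (j + 1) ≤ n * k := by
              calc k * (j + 1) = (j + 1) * k := Nat.mul_comm _ _
                _ ≤ n * k := Nat.mul_le_mul_right _ hj
            omega
        _ = 1 := zpow_zero _
    rw [Function.iterate_succ_apply', Function.iterate_succ_apply',
      step_eq hT hnorm, IH]
    ring

end Aux

/-- For `|q|_p = p^k > 1`, the number of points of period `n` under the `p`-adic
`q`-transformation is exactly `p^{nk}`. -/
theorem qTransform_card_periodic (p : ℕ) [Fact p.Prime] (q : ℚ_[p]) (k : ℕ) (hk : 1 ≤ k)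
    (hq : ‖q‖ = (p : ℝ) ^ k) (T : ℤ_[p] → ℤ_[p]) (hT : IsDigitTrunc q T)
    (n : ℕ) (hn : 1 ≤ n) :
    Nat.card {x : ℤ_[p] // T^[n] x = x} = p ^ (n * k) := by
  have hp1 : (1 : ℝ) < p := by exact_mod_cast (Fact.out : p.Prime).one_lt
  set s : ℕ := n * k with hs
  have hs1 : 1 ≤ s := Nat.one_le_iff_ne_zero.2 (by positivity)
  -- U = q^n * p^s is a unit of ℤ_p
  have hUnorm : ‖q ^ n * (p : ℚ_[p]) ^ s‖ = 1 := by
    rw [norm_mul, norm_pow, norm_pow, hq, Padic.norm_p, ← pow_mul, inv_pow,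
      mul_comm k n, mul_inv_cancel₀ (by positivity)]
  set U : ℤ_[p] := ⟨q ^ n * (p : ℚ_[p]) ^ s, le_of_eq hUnorm⟩ with hU
  have hPnorm : ‖((p : ℤ_[p]) ^ s)‖ < 1 := by
    rw [PadicInt.norm_p_pow]
    apply zpow_lt_one_of_neg₀ hp1
    omega
  have hun : ‖U‖ = 1 := by rw [PadicInt.norm_def]; exact hUnorm
  have hWnorm : ‖U - (p : ℤ_[p]) ^ s‖ = 1 := by
    have hne : ‖U‖ ≠ ‖-((p : ℤ_[p]) ^ s)‖ := by
      rw [hun, norm_neg]; exact (ne_of_lt hPnorm).symm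
    rw [sub_eq_add_neg, PadicInt.norm_add_eq_max_of_ne hne, hun, norm_neg]
    exact max_eq_left (le_of_lt hPnorm)
  set W : ℤ_[p] := U - (p : ℤ_[p]) ^ s with hWdef
  have hWunit : IsUnit W := PadicInt.isUnit_iff.2 hWnorm
  obtain ⟨w, hw⟩ := hWunit
  have hW0 : (W : ℚ_[p]) ≠ 0 := by
    intro hcon
    have : ‖W‖ = 0 := by rw [PadicInt.norm_def, hcon, norm_zero]
    rw [hWnorm] at this; norm_num at this
  -- coercion of W
  have hWcoe : (W : ℚ_[p]) = q ^ n * (p : ℚ_[p]) ^ s - (p : ℚ_[p]) ^ s := by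
    rw [hWdef, PadicInt.coe_sub, PadicInt.coe_pow, PadicInt.coe_natCast]
  -- the key iterate identity
  have key : ∀ x y : ℤ_[p],
      (T^[n] (x + (p : ℤ_[p]) ^ s * y) : ℚ_[p])
        = (T^[n] x : ℚ_[p]) + q ^ n * ((p : ℚ_[p]) ^ s * (y : ℚ_[p])) := by
    intro x y
    have ht : ‖(((p : ℤ_[p]) ^ s * y : ℤ_[p]) : ℚ_[p])‖ ≤ (p : ℝ) ^ (-(n * k : ℕ) : ℤ) := by
      push_cast
      rw [norm_mul, norm_pow, Padic.norm_p, inv_pow, ← zpow_natCast (p:ℝ) s, ← zpow_neg]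
      calc (p : ℝ) ^ (-(s : ℕ) : ℤ) * ‖((y : ℤ_[p]) : ℚ_[p])‖
          ≤ (p : ℝ) ^ (-(s : ℕ) : ℤ) * 1 := by
            apply mul_le_mul_of_nonneg_left _ (by positivity)
            rw [← PadicInt.norm_def]; exact PadicInt.norm_le_one y
        _ = (p : ℝ) ^ (-(n * k : ℕ) : ℤ) := by rw [mul_one, hs]
    have := iter_eq hq hT n x ((p : ℤ_[p]) ^ s * y) ht n le_rfl
    rw [this]
    push_cast
    ring
  -- the counting bijection
  have hcard : Nat.card {x : ℤ_[p] // T^[n] x = x} = Nat.card (ZMod (p ^ s)) := by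
    apply Nat.card_eq_of_bijective (fun x => PadicInt.toZModPow s x.1)
    constructor
    · rintro ⟨x, hx⟩ ⟨x', hx'⟩ hxx
      have hxx' : PadicInt.toZModPow (p := p) s x = PadicInt.toZModPow (p := p) s x' := hxx
      have hker : x' - x ∈ RingHom.ker (PadicInt.toZModPow (p := p) s) := by
        rw [RingHom.mem_ker, map_sub, hxx', sub_self]
      rw [PadicInt.ker_toZModPow, Ideal.mem_span_singleton] at hker
      obtain ⟨y, hy⟩ := hker
      have hx'eq : x' = x + (p : ℤ_[p]) ^ s * y := by rw [← hy]; ring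
      have hkey := key x y
      rw [← hx'eq, hx', hx] at hkey
      -- (x' : ℚ) = x + q^n p^s y  and x' = x + p^s y
      have hcoe : ((x + (p : ℤ_[p]) ^ s * y : ℤ_[p]) : ℚ_[p])
          = (x : ℚ_[p]) + (p : ℚ_[p]) ^ s * (y : ℚ_[p]) := by push_cast; ring
      rw [hx'eq, hcoe] at hkey
      have hzero : (W : ℚ_[p]) * (y : ℚ_[p]) = 0 := by
        rw [hWcoe]
        linear_combination -hkey
      have hy0 : (y : ℚ_[p]) = 0 := by
        rcases mul_eq_zero.1 hzero with h | h
        · exact absurd h hW0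
        · exact h
      have : y = 0 := Subtype.ext hy0
      apply Subtype.ext
      show x = x'
      rw [hx'eq, this, mul_zero, add_zero]
    · intro a
      set a₀ : ℤ_[p] := ((a.val : ℕ) : ℤ_[p]) with ha₀
      set y : ℤ_[p] := (↑w⁻¹ : ℤ_[p]) * (a₀ - T^[n] a₀) with hy
      have hWy : W * y = a₀ - T^[n] a₀ := by
        rw [hy, ← hw, ← mul_assoc, ← Units.val_mul, mul_inv_cancel, Units.val_one, one_mul]
      set x : ℤ_[p] := a₀ + (p : ℤ_[p]) ^ s * y with hx
      have hfix : T^[n] x = x := by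
        apply Subtype.ext
        have hkey := key a₀ y
        rw [← hx] at hkey
        rw [hkey]
        have hWy' : (W : ℚ_[p]) * (y : ℚ_[p]) = (a₀ : ℚ_[p]) - (T^[n] a₀ : ℚ_[p]) := by
          exact_mod_cast congrArg (fun z : ℤ_[p] => (z : ℚ_[p])) hWy
        rw [hWcoe] at hWy'
        have hxcoe : ((x : ℤ_[p]) : ℚ_[p]) = (a₀ : ℚ_[p]) + (p : ℚ_[p]) ^ s * (y : ℚ_[p]) := by
          rw [hx]; push_cast; ring
        rw [hxcoe]
        linear_combination hWy'
      refine ⟨⟨x, hfix⟩, ?_⟩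
      have hps : PadicInt.toZModPow (p := p) s ((p : ℤ_[p]) ^ s * y) = 0 := by
        have : (p : ℤ_[p]) ^ s * y ∈ RingHom.ker (PadicInt.toZModPow (p := p) s) := by
          rw [PadicInt.ker_toZModPow, Ideal.mem_span_singleton]
          exact dvd_mul_right _ y
        rwa [RingHom.mem_ker] at this
      show PadicInt.toZModPow s x = a
      rw [hx, map_add, hps, add_zero, ha₀, map_natCast]
      haveI : NeZero (p ^ s) := ⟨(pow_pos (Fact.out : p.Prime).pos s).ne'⟩
      exact ZMod.natCast_rightInverse a
  rw [hcard, Nat.card_zmod]
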